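/- arXiv:2405.16598 — 2 statements merged into one kernel-verified Lean document; each statement's English description precedes it below -/
import Mathlib

section
/- Let G ∈ ℝ^{n×K}, U₀ ∈ ℝ^{n×K} with U₀ᵀU₀ = I_K, and define the skew-symmetric matrix W = GU₀ᵀ − U₀Gᵀ. Then the directional derivative ⟨−WU₀, G⟩ = −(1/2)‖GU₀ᵀ − U₀Gᵀ‖_F² ≤ 0, where ⟨A,B⟩ = trace(AᵀB). -/
/-!
Write `A = G U₀ᵀ`, so that `W = A - Aᵀ` is skew-symmetric. Cycling the trace and using `Wᵀ = -W`
turns the directional derivative into `tr(W A)`, while `‖W‖_F² = tr(WᵀW) = -tr(W (A - Aᵀ))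
= -2 tr(W A)`, because `tr(W Aᵀ) = -tr(W A)` for skew `W`.
-/

open Matrix

namespace Matrix

variable {n k R : Type*}

theorem transpose_sub_transpose_self [AddCommGroup R] (A : Matrix n n R) :
    (A - Aᵀ)ᵀ = -(A - Aᵀ) := by
  rw [transpose_sub, transpose_transpose, neg_sub]

variable [Fintype n] [Fintype k]

theorem trace_transpose_mul_self_eq_sum_sq [CommSemiring R] (M : Matrix n k R) :
    trace (Mᵀ * M) = ∑ i, ∑ j, M i j ^ 2 := by
  simp only [trace, diag, mul_apply, transpose_apply, sq]
  exact Finset.sum_comm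

section Skew

variable [CommRing R] {W : Matrix n n R}

theorem trace_mul_transpose_of_transpose_eq_neg (hW : Wᵀ = -W) (B : Matrix n n R) :
    trace (W * Bᵀ) = -trace (W * B) := by
  rw [← trace_transpose, transpose_mul, transpose_transpose, hW, Matrix.mul_neg, trace_neg,
    trace_mul_comm]

theorem trace_transpose_mul_self_sub_transpose (A : Matrix n n R) :
    trace ((A - Aᵀ)ᵀ * (A - Aᵀ)) = -2 * trace ((A - Aᵀ) * A) := by
  have hW := transpose_sub_transpose_self A
  rw [hW, Matrix.neg_mul, trace_neg, Matrix.mul_sub, trace_sub,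
    trace_mul_transpose_of_transpose_eq_neg hW]
  ring

theorem trace_transpose_neg_mul_mul (hW : Wᵀ = -W) (U G : Matrix n k R) :
    trace ((-(W * U))ᵀ * G) = trace (W * (G * Uᵀ)) := by
  rw [transpose_neg, transpose_mul, hW, Matrix.mul_neg, Matrix.neg_mul, Matrix.neg_mul, neg_neg,
    trace_mul_cycle, trace_mul_comm]

end Skew

end Matrix

theorem curvilinear_descent_direction_general (n K : ℕ)
    (G U₀ : Matrix (Fin n) (Fin K) ℝ) :
    let W := G * U₀ᵀ - U₀ * Gᵀ
    Matrix.trace ((-(W * U₀))ᵀ * G) =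
      -(1 / 2) * ∑ i, ∑ j, ((G * U₀ᵀ - U₀ * Gᵀ) i j) ^ 2 ∧
    Matrix.trace ((-(W * U₀))ᵀ * G) ≤ 0 := by
  intro W
  have hW : W = G * U₀ᵀ - (G * U₀ᵀ)ᵀ := by simp [W, transpose_mul]
  have hdir : trace ((-(W * U₀))ᵀ * G) = -(1 / 2) * ∑ i, ∑ j, W i j ^ 2 := by
    rw [trace_transpose_neg_mul_mul (hW ▸ transpose_sub_transpose_self _),
      ← trace_transpose_mul_self_eq_sum_sq, hW, trace_transpose_mul_self_sub_transpose]
    ring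
  have hnorm : 0 ≤ ∑ i, ∑ j, W i j ^ 2 := by positivity
  exact ⟨hdir, by linarith⟩

theorem curvilinear_descent_direction (n K : ℕ)
    (G U₀ : Matrix (Fin n) (Fin K) ℝ) (hU₀ : U₀ᵀ * U₀ = 1) :
    let W := G * U₀ᵀ - U₀ * Gᵀ
    Matrix.trace ((-(W * U₀))ᵀ * G) =
      -(1 / 2) * ∑ i, ∑ j, ((G * U₀ᵀ - U₀ * Gᵀ) i j) ^ 2 ∧
    Matrix.trace ((-(W * U₀))ᵀ * G) ≤ 0 :=
  curvilinear_descent_direction_general n K G U₀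
end

section
/- Let G ∈ ℝ^{n×n} be symmetric, X a symmetric projection matrix (X² = X), and W = GX − XG. Then ⟨XW − WX, G⟩ = 2‖XGX‖_F² − ‖XG‖_F² − ‖GX‖_F² ≤ 0, where ⟨A,B⟩ = trace(AᵀB). -/
open Matrix

lemma sum_sq_eq_trace_aux {n : ℕ} (A : Matrix (Fin n) (Fin n) ℝ) :
    ∑ i, ∑ j, (A i j) ^ 2 = Matrix.trace (Aᵀ * A) := by
  simp only [Matrix.trace, Matrix.diag, Matrix.mul_apply, Matrix.transpose_apply, sq]
  exact Finset.sum_comm ..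

theorem projection_manifold_descent (n : ℕ)
    (G X : Matrix (Fin n) (Fin n) ℝ)
    (hG : Gᵀ = G) (hX : Xᵀ = X) (hproj : X * X = X) :
    let W := G * X - X * G
    Matrix.trace ((X * W - W * X)ᵀ * G) =
      2 * (∑ i, ∑ j, ((X * G * X) i j) ^ 2)
        - (∑ i, ∑ j, ((X * G) i j) ^ 2)
        - (∑ i, ∑ j, ((G * X) i j) ^ 2) ∧
    Matrix.trace ((X * W - W * X)ᵀ * G) ≤ 0 := by
  intro W
  have hWdef : W = G * X - X * G := rfl
  have hWT : Wᵀ = -W := by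
    rw [hWdef]
    simp [Matrix.transpose_sub, Matrix.transpose_mul, hG, hX, neg_sub]
  have hproj' : ∀ A : Matrix (Fin n) (Fin n) ℝ, X * (X * A) = X * A := by
    intro A; rw [← mul_assoc, hproj]
  -- LHS = trace (W * W)
  have hL : Matrix.trace ((X * W - W * X)ᵀ * G) = Matrix.trace (W * W) := by
    rw [Matrix.transpose_sub, Matrix.transpose_mul, Matrix.transpose_mul, hX, hWT]
    have : ((-W) * X - X * (-W)) * G = X * W * G - W * X * G := by noncomm_ring
    rw [this, Matrix.trace_sub]
    rw [show X * W * G = X * (W * G) by rw [mul_assoc], Matrix.trace_mul_comm X (W * G)]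
    rw [show W * G * X = W * (G * X) by rw [mul_assoc],
        show W * X * G = W * (X * G) by rw [mul_assoc],
        ← Matrix.trace_sub, ← Matrix.mul_sub, ← hWdef]
  -- trace (W * W) expansion
  have hWW : Matrix.trace (W * W)
      = 2 * Matrix.trace (X * G * (X * G)) - Matrix.trace (G * (X * G)) - Matrix.trace (X * (G * (G * X))) := by
    rw [hWdef]
    have expand : (G * X - X * G) * (G * X - X * G)
        = G * (X * (G * X)) - G * (X * (X * G)) - X * (G * (G * X)) + X * (G * (X * G)) := by
      noncomm_ring
    rw [expand, hproj']
    rw [Matrix.trace_add, Matrix.trace_sub, Matrix.trace_sub]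
    rw [Matrix.trace_mul_comm G (X * (G * X))]
    rw [show X * (G * X) * G = X * G * (X * G) by noncomm_ring,
        show X * (G * (X * G)) = X * G * (X * G) by noncomm_ring]
    ring
  -- RHS pieces
  have e1 : ∑ i, ∑ j, ((X * G * X) i j) ^ 2 = Matrix.trace (X * G * (X * G)) := by
    rw [sum_sq_eq_trace_aux]
    have ht : (X * G * X)ᵀ = X * G * X := by
      simp [Matrix.transpose_mul, hG, hX, mul_assoc]
    rw [ht]
    have : X * G * X * (X * G * X) = X * (G * (X * (G * X))) := by
      rw [show X * G * X * (X * G * X) = X * (G * (X * (X * (G * X)))) by noncomm_ring, hproj']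
    rw [this, Matrix.trace_mul_comm X (G * (X * (G * X)))]
    rw [show G * (X * (G * X)) * X = G * (X * (G * (X * X))) by noncomm_ring, hproj,
        Matrix.trace_mul_comm G (X * (G * X))]
    noncomm_ring
  have e2 : ∑ i, ∑ j, ((X * G) i j) ^ 2 = Matrix.trace (G * (X * G)) := by
    rw [sum_sq_eq_trace_aux, Matrix.transpose_mul, hG, hX]
    rw [show G * X * (X * G) = G * (X * (X * G)) by noncomm_ring, hproj']
  have e3 : ∑ i, ∑ j, ((G * X) i j) ^ 2 = Matrix.trace (X * (G * (G * X))) := by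
    rw [sum_sq_eq_trace_aux, Matrix.transpose_mul, hG, hX]
    noncomm_ring
  constructor
  · rw [hL, hWW, e1, e2, e3]
  · rw [hL]
    have : Matrix.trace (W * W) = - ∑ i, ∑ j, (W i j) ^ 2 := by
      rw [sum_sq_eq_trace_aux, hWT]
      simp
    rw [this]
    have hnn : (0:ℝ) ≤ ∑ i, ∑ j, (W i j) ^ 2 := by positivity
    linarith
end
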